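/- arXiv:1912.10921 — 4 statements merged into one kernel-verified Lean document; each statement's English description precedes it below -/
import Mathlib

section
/- Let v, w : ℝⁿ → ℝⁿ be bounded continuous functions and let 0 < ε < 1. Then for every x ∈ ℝⁿ the following identity of n×n matrices holds: (v ⊗ w)^ε(x) − v^ε(x) ⊗ w^ε(x) = ∫_{ℝⁿ} (δ_y v ⊗ δ_y w)(x) φ_ε(y) dy − (v − v^ε)(x) ⊗ (w − w^ε)(x), where δ_y v(x) = v(x−y) − v(x) and δ_y w(x) = w(x−y) − w(x). -/
open MeasureTheory Real Set

/-- The rescaled mollifier `φ_ε(y) = ε⁻ⁿ φ(y/ε)`. -/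
noncomputable def moll (n : ℕ) (φ : EuclideanSpace ℝ (Fin n) → ℝ) (ε : ℝ)
    (y : EuclideanSpace ℝ (Fin n)) : ℝ :=
  (ε ^ n)⁻¹ * φ (ε⁻¹ • y)

/-- Mollification `v^ε = v ∗ φ_ε`. -/
noncomputable def mollConv {n m : ℕ} (φ : EuclideanSpace ℝ (Fin n) → ℝ) (ε : ℝ)
    (v : EuclideanSpace ℝ (Fin n) → EuclideanSpace ℝ (Fin m))
    (x : EuclideanSpace ℝ (Fin n)) : EuclideanSpace ℝ (Fin m) :=
  ∫ y, moll n φ ε y • v (x - y)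

lemma moll_cont {n : ℕ} {φ : EuclideanSpace ℝ (Fin n) → ℝ} {ε : ℝ}
    (hφ : Continuous φ) : Continuous (moll n φ ε) :=
  continuous_const.mul (hφ.comp (continuous_const_smul _))

lemma moll_hcs {n : ℕ} {φ : EuclideanSpace ℝ (Fin n) → ℝ} {ε : ℝ}
    (hφ_supp : ∀ x, 1 < ‖x‖ → φ x = 0) (hε0 : 0 < ε) :
    HasCompactSupport (moll n φ ε) := by
  apply HasCompactSupport.intro (isCompact_closedBall (0 : EuclideanSpace ℝ (Fin n)) ε)
  intro x hx
  have h : ε < ‖x‖ := by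
    simpa [Metric.mem_closedBall, dist_zero_right, not_le] using hx
  have : 1 < ‖ε⁻¹ • x‖ := by
    rw [norm_smul, Real.norm_eq_abs, abs_of_pos (inv_pos.2 hε0)]
    rw [lt_inv_mul_iff₀ hε0, mul_one]
    exact h
  simp [moll, hφ_supp _ this]

lemma moll_integral {n : ℕ} {φ : EuclideanSpace ℝ (Fin n) → ℝ} {ε : ℝ}
    (hφ_int : ∫ x, φ x = 1) (hε0 : 0 < ε) :
    ∫ y, moll n φ ε y = 1 := by
  simp only [moll]
  rw [integral_const_mul, Measure.integral_comp_inv_smul_of_nonneg volume φ hε0.le,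
    hφ_int, finrank_euclideanSpace_fin]
  simp [inv_mul_cancel₀ (pow_ne_zero n hε0.ne')]

lemma moll_mul_integrable {n : ℕ} {φ : EuclideanSpace ℝ (Fin n) → ℝ} {ε : ℝ}
    (hφ : Continuous φ) (hφ_supp : ∀ x, 1 < ‖x‖ → φ x = 0) (hε0 : 0 < ε)
    {f : EuclideanSpace ℝ (Fin n) → ℝ} (hf : Continuous f) :
    Integrable (fun y => moll n φ ε y * f y) :=
  Continuous.integrable_of_hasCompactSupport ((moll_cont hφ).mul hf)
    ((moll_hcs hφ_supp hε0).mul_right)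

lemma mollConv_apply {n m : ℕ} {φ : EuclideanSpace ℝ (Fin n) → ℝ} {ε : ℝ}
    (hφ : Continuous φ) (hφ_supp : ∀ x, 1 < ‖x‖ → φ x = 0) (hε0 : 0 < ε)
    {v : EuclideanSpace ℝ (Fin n) → EuclideanSpace ℝ (Fin m)} (hv : Continuous v)
    (x : EuclideanSpace ℝ (Fin n)) (i : Fin m) :
    mollConv φ ε v x i = ∫ y, moll n φ ε y * v (x - y) i := by
  have hI : Integrable (fun y => moll n φ ε y • v (x - y)) := by
    apply Continuous.integrable_of_hasCompactSupport
    · exact (moll_cont hφ).smul (hv.comp (continuous_const.sub continuous_id))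
    · exact (moll_hcs hφ_supp hε0).smul_right
  have := (EuclideanSpace.proj (𝕜 := ℝ) i).integral_comp_comm hI
  simpa [mollConv, PiLp.proj_apply] using this.symm

/-- the Constantin–E–Titi commutator identity
`(v ⊗ w)^ε − v^ε ⊗ w^ε = ∫ (δ_y v ⊗ δ_y w) φ_ε(y) dy − (v − v^ε) ⊗ (w − w^ε)`,
stated entrywise. -/
theorem commutator_identity
    (n : ℕ)
    (φ : EuclideanSpace ℝ (Fin n) → ℝ)
    (hφ_smooth : ContDiff ℝ (⊤ : ℕ∞) φ) (hφ_nonneg : ∀ x, 0 ≤ φ x)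
    (hφ_supp : ∀ x, 1 < ‖x‖ → φ x = 0)
    (hφ_rad : ∀ x y, ‖x‖ = ‖y‖ → φ x = φ y)
    (hφ_int : ∫ x, φ x = 1)
    (ε : ℝ) (hε0 : 0 < ε) (hε1 : ε < 1)
    (v w : EuclideanSpace ℝ (Fin n) → EuclideanSpace ℝ (Fin n))
    (hv_cont : Continuous v) (hw_cont : Continuous w)
    (hv_bdd : ∃ Bv, ∀ x, ‖v x‖ ≤ Bv) (hw_bdd : ∃ Bw, ∀ x, ‖w x‖ ≤ Bw) :
    ∀ (x : EuclideanSpace ℝ (Fin n)) (i j : Fin n),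
      (∫ y, moll n φ ε y * (v (x - y) i * w (x - y) j))
          - mollConv φ ε v x i * mollConv φ ε w x j
        = (∫ y, moll n φ ε y * ((v (x - y) i - v x i) * (w (x - y) j - w x j)))
          - (v x i - mollConv φ ε v x i) * (w x j - mollConv φ ε w x j) := by
  intro x i j
  have hφc : Continuous φ := hφ_smooth.continuous
  have hvi : Continuous (fun y => v (x - y) i) :=
    (continuous_apply i).comp ((PiLp.continuous_ofLp 2 _).comp (hv_cont.comp (continuous_const.sub continuous_id)))
  have hwj : Continuous (fun y => w (x - y) j) :=
    (continuous_apply j).comp ((PiLp.continuous_ofLp 2 _).comp (hw_cont.comp (continuous_const.sub continuous_id)))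
  have I0 : Integrable (moll n φ ε) :=
    (moll_cont hφc).integrable_of_hasCompactSupport (moll_hcs hφ_supp hε0)
  have I1 : Integrable (fun y => moll n φ ε y * (v (x - y) i * w (x - y) j)) :=
    moll_mul_integrable hφc hφ_supp hε0 (hvi.mul hwj)
  have I2 : Integrable (fun y => moll n φ ε y * v (x - y) i) :=
    moll_mul_integrable hφc hφ_supp hε0 hvi
  have I3 : Integrable (fun y => moll n φ ε y * w (x - y) j) :=
    moll_mul_integrable hφc hφ_supp hε0 hwj
  have kv : mollConv φ ε v x i = ∫ y, moll n φ ε y * v (x - y) i :=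
    mollConv_apply hφc hφ_supp hε0 hv_cont x i
  have kw : mollConv φ ε w x j = ∫ y, moll n φ ε y * w (x - y) j :=
    mollConv_apply hφc hφ_supp hε0 hw_cont x j
  have hsplit : (fun y => moll n φ ε y * ((v (x - y) i - v x i) * (w (x - y) j - w x j)))
      = fun y => (moll n φ ε y * (v (x - y) i * w (x - y) j)
          - w x j * (moll n φ ε y * v (x - y) i))
          - (v x i * (moll n φ ε y * w (x - y) j)
          - (v x i * w x j) * moll n φ ε y) := by
    funext y; ring
  have J1 : Integrable (fun y => moll n φ ε y * (v (x - y) i * w (x - y) j)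
      - w x j * (moll n φ ε y * v (x - y) i)) := I1.sub (I2.const_mul (w x j))
  have J2 : Integrable (fun y => v x i * (moll n φ ε y * w (x - y) j)
      - (v x i * w x j) * moll n φ ε y) := (I3.const_mul (v x i)).sub (I0.const_mul (v x i * w x j))
  rw [hsplit, integral_sub J1 J2,
    integral_sub I1 (I2.const_mul _), integral_sub (I3.const_mul _) (I0.const_mul _),
    integral_const_mul, integral_const_mul, integral_const_mul,
    moll_integral hφ_int hε0, kv, kw]
  ring
end

section
/- Let 0 ≤ α < 1, λ > 0, and let u : ℝⁿ → ℝᵐ be a bounded continuous function with finite Hölog seminorm [u]_{C^{0,α}_λ(ℝⁿ)}. Then for every 0 < ε < 1, the mollification u^ε is differentiable and for every x ∈ ℝⁿ, |∇u^ε(x)| ≤ C (log(1/ε))^{−λ} ε^{α−1} [u]_{C^{0,α}_λ(ℝⁿ)}, where C = ∫_{ℝⁿ} |∇φ(z)| dz depends only on the mollifier φ. -/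
open MeasureTheory Real Set

set_option maxHeartbeats 1000000 in
set_option synthInstance.maxHeartbeats 400000 in
/-- gradient estimate for the mollification of a Hölog function:
`u^ε` is differentiable and `|∇u^ε(x)| ≤ C (log(1/ε))^{−λ} ε^{α−1} [u]_{C^{0,α}_λ}`
with `C = ∫ |∇φ|`. -/
theorem mollification_gradient_holog
    (n m : ℕ) (α lam : ℝ) (hα0 : 0 ≤ α) (hα1 : α < 1) (hlam : 0 < lam)
    (u : EuclideanSpace ℝ (Fin n) → EuclideanSpace ℝ (Fin m))
    (hu_cont : Continuous u) (hu_bdd : ∃ B, ∀ x, ‖u x‖ ≤ B)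
    (K : ℝ)
    (hu_holog : ∀ x y : EuclideanSpace ℝ (Fin n), 0 < ‖x - y‖ → ‖x - y‖ < 1 →
      ‖u x - u y‖ ≤ K * ((Real.log (1 / ‖x - y‖)) ^ (-lam) * ‖x - y‖ ^ α))
    (φ : EuclideanSpace ℝ (Fin n) → ℝ)
    (hφ_smooth : ContDiff ℝ (⊤ : ℕ∞) φ) (hφ_nonneg : ∀ x, 0 ≤ φ x)
    (hφ_supp : ∀ x, 1 < ‖x‖ → φ x = 0)
    (hφ_rad : ∀ x y, ‖x‖ = ‖y‖ → φ x = φ y)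
    (hφ_int : ∫ x, φ x = 1)
    (ε : ℝ) (hε0 : 0 < ε) (hε1 : ε < 1) :
    Differentiable ℝ (mollConv φ ε u) ∧
      ∀ x, ‖fderiv ℝ (mollConv φ ε u) x‖ ≤
        (∫ z, ‖fderiv ℝ φ z‖) * ((Real.log (1 / ε)) ^ (-lam) * ε ^ (α - 1) * K) := by
  rcases Nat.eq_zero_or_pos n with rfl | hn
  · -- trivial case `n = 0`: the domain is a subsingleton
    constructor
    · intro x
      exact (hasFDerivAt_of_subsingleton (𝕜 := ℝ) _ x).differentiableAt
    · intro x
      have h0 : ∀ z : EuclideanSpace ℝ (Fin 0), fderiv ℝ φ z = 0 :=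
        fun z => (hasFDerivAt_of_subsingleton (𝕜 := ℝ) φ z).fderiv
      rw [(hasFDerivAt_of_subsingleton (𝕜 := ℝ) (mollConv φ ε u) x).fderiv]
      simp [h0]
  -- main case `n ≥ 1`
  have hεne : ε ≠ 0 := ne_of_gt hε0
  have hlog : 0 < Real.log (1 / ε) := Real.log_pos (one_lt_one_div hε0 hε1)
  -- `K` is nonnegative
  have hntriv : Nontrivial (EuclideanSpace ℝ (Fin n)) := by
    have : 0 < Module.finrank ℝ (EuclideanSpace ℝ (Fin n)) := by
      simp only [finrank_euclideanSpace_fin]; omega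
    exact Module.nontrivial_of_finrank_pos this
  have hK : 0 ≤ K := by
    obtain ⟨y₀, hy₀⟩ := exists_norm_eq (EuclideanSpace ℝ (Fin n))
      (show (0:ℝ) ≤ 1/2 by norm_num)
    have hn0 : ‖y₀ - (0 : EuclideanSpace ℝ (Fin n))‖ = 1/2 := by rw [sub_zero, hy₀]
    have h := hu_holog y₀ 0 (by rw [hn0]; norm_num) (by rw [hn0]; norm_num)
    rw [hn0] at h
    have hc : 0 < (Real.log (1 / (1/2 : ℝ))) ^ (-lam) * (1/2 : ℝ) ^ α := by
      have h2 : 0 < Real.log (1 / (1/2 : ℝ)) := Real.log_pos (by norm_num)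
      positivity
    nlinarith [norm_nonneg (u y₀ - u 0), h]
  set M : ℝ := (Real.log (1 / ε)) ^ (-lam) * ε ^ α with hM_def
  have hM : 0 ≤ M := mul_nonneg (Real.rpow_nonneg hlog.le _) (Real.rpow_nonneg hε0.le _)
  have hKM : 0 ≤ K * M := mul_nonneg hK hM
  set L : ℝ →L[ℝ] EuclideanSpace ℝ (Fin m) →L[ℝ] EuclideanSpace ℝ (Fin m) :=
    ContinuousLinearMap.lsmul ℝ ℝ with hL_def
  set P : (EuclideanSpace ℝ (Fin n) →L[ℝ] ℝ) →L[ℝ]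
      EuclideanSpace ℝ (Fin m) →L[ℝ]
      (EuclideanSpace ℝ (Fin n) →L[ℝ] EuclideanSpace ℝ (Fin m)) :=
    L.precompL (EuclideanSpace ℝ (Fin n)) with hP_def
  set f : EuclideanSpace ℝ (Fin n) → ℝ := moll n φ ε with hf_def
  -- basic properties of `f`
  have hf_smooth : ContDiff ℝ 1 f := by
    have : ContDiff ℝ (⊤ : ℕ∞) f := contDiff_const.mul (hφ_smooth.comp (contDiff_const_smul ε⁻¹))
    exact this.of_le (by simp)
  have hf_supp0 : ∀ y, ε < ‖y‖ → f y = 0 := by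
    intro y hy
    have : 1 < ‖ε⁻¹ • y‖ := by
      rw [norm_smul, norm_inv, Real.norm_eq_abs, abs_of_pos hε0,
        inv_mul_eq_div, lt_div_iff₀ hε0, one_mul]
      exact hy
    simp [hf_def, moll, hφ_supp _ this]
  have hcf : HasCompactSupport f := by
    refine HasCompactSupport.intro (isCompact_closedBall (0 : EuclideanSpace ℝ (Fin n)) ε) ?_
    intro y hy
    rw [Metric.mem_closedBall, dist_zero_right, not_le] at hy
    exact hf_supp0 y hy
  have hu_li : LocallyIntegrable u volume := hu_cont.locallyIntegrable
  -- `mollConv` is the convolution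
  have hfeq : mollConv φ ε u = convolution f u L volume := by
    funext x
    simp [mollConv, convolution, ContinuousLinearMap.lsmul_apply, hL_def, hf_def]
  have hderiv : ∀ x, HasFDerivAt (convolution f u L volume)
      ((convolution (fderiv ℝ f) u P volume) x) x :=
    fun x => hcf.hasFDerivAt_convolution_left L hf_smooth hu_li x
  constructor
  · intro x
    rw [hfeq]
    exact (hderiv x).differentiableAt
  intro x
  -- derivative of the rescaled mollifier
  have hf' : ∀ y, fderiv ℝ f y = ((ε ^ n)⁻¹ * ε⁻¹) • fderiv ℝ φ (ε⁻¹ • y) := by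
    intro y
    have h1 : HasFDerivAt (fun y : EuclideanSpace ℝ (Fin n) => ε⁻¹ • y)
        (ε⁻¹ • ContinuousLinearMap.id ℝ (EuclideanSpace ℝ (Fin n))) y :=
      (hasFDerivAt_id y).const_smul ε⁻¹
    have h2 : HasFDerivAt φ (fderiv ℝ φ (ε⁻¹ • y)) (ε⁻¹ • y) :=
      (hφ_smooth.differentiable (by simp) (ε⁻¹ • y)).hasFDerivAt
    have h3 := (h2.comp y h1).const_mul ((ε ^ n)⁻¹)
    have heq : ((ε ^ n)⁻¹ : ℝ) • ((fderiv ℝ φ (ε⁻¹ • y)).comp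
        (ε⁻¹ • ContinuousLinearMap.id ℝ (EuclideanSpace ℝ (Fin n))))
        = ((ε ^ n)⁻¹ * ε⁻¹) • fderiv ℝ φ (ε⁻¹ • y) := by
      ext v
      simp only [ContinuousLinearMap.smul_apply, ContinuousLinearMap.coe_comp',
        Function.comp_apply, ContinuousLinearMap.id_apply, ContinuousLinearMap.map_smul,
        smul_smul]
    rw [heq] at h3
    exact h3.fderiv
  have hφ'cont : Continuous (fderiv ℝ φ) := hφ_smooth.continuous_fderiv (by simp)
  have hf'eqfun : fderiv ℝ f = fun y => ((ε ^ n)⁻¹ * ε⁻¹) • fderiv ℝ φ (ε⁻¹ • y) :=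
    funext hf'
  have hf'cont : Continuous (fderiv ℝ f) := by
    rw [hf'eqfun]
    exact (hφ'cont.comp (continuous_const_smul ε⁻¹)).const_smul ((ε ^ n)⁻¹ * ε⁻¹)
  have hcs' : HasCompactSupport (fderiv ℝ f) := hcf.fderiv ℝ
  -- the key vanishing of `∫ f'` applied to the constant `u x`
  have hI1 : Integrable (fun y => P (fderiv ℝ f y) (u (x - y))) := by
    refine Continuous.integrable_of_hasCompactSupport
      ((P.continuous.comp hf'cont).clm_apply
        (hu_cont.comp (continuous_const.sub continuous_id))) ?_
    refine HasCompactSupport.intro hcs' ?_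
    intro y hy
    simp [image_eq_zero_of_notMem_tsupport hy]
  have hI2 : Integrable (fun y => P (fderiv ℝ f y) (u x)) := by
    refine Continuous.integrable_of_hasCompactSupport
      ((P.continuous.comp hf'cont).clm_apply continuous_const) ?_
    refine HasCompactSupport.intro hcs' ?_
    intro y hy
    simp [image_eq_zero_of_notMem_tsupport hy]
  have hzero : ∫ y, P (fderiv ℝ f y) (u x) = 0 := by
    have hconst_li : LocallyIntegrable (fun _ : EuclideanSpace ℝ (Fin n) => u x) volume :=
      continuous_const.locallyIntegrable
    have hd1 := hcf.hasFDerivAt_convolution_left L hf_smooth hconst_li x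
    have hconst : convolution f (fun _ => u x) L volume = fun _ => (∫ y, f y) • u x := by
      funext z
      rw [convolution_def]
      simp only [hL_def, ContinuousLinearMap.lsmul_apply]
      rw [integral_smul_const]
    rw [hconst] at hd1
    have h0 := hd1.unique (hasFDerivAt_const _ x)
    calc ∫ y, P (fderiv ℝ f y) (u x)
        = convolution (fderiv ℝ f) (fun _ => u x) P volume x := rfl
      _ = 0 := h0
  -- the derivative written with the increment
  have hdx : fderiv ℝ (mollConv φ ε u) x = ∫ y, P (fderiv ℝ f y) (u (x - y) - u x) := by
    rw [hfeq, (hderiv x).fderiv]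
    have h1 : convolution (fderiv ℝ f) u P volume x = ∫ y, P (fderiv ℝ f y) (u (x - y)) := rfl
    rw [h1]
    simp only [map_sub]
    rw [integral_sub hI1 hI2, hzero, sub_zero]
  -- pointwise bound
  have hsupp' : ∀ y, ε < ‖y‖ → fderiv ℝ f y = 0 := by
    intro y hy
    have hts : tsupport f ⊆ Metric.closedBall 0 ε := by
      refine closure_minimal ?_ Metric.isClosed_closedBall
      intro z hz
      rw [Metric.mem_closedBall, dist_zero_right]
      by_contra hcon
      push_neg at hcon
      exact hz (hf_supp0 z hcon)
    have : y ∉ tsupport f := by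
      intro hmem
      have := hts hmem
      rw [Metric.mem_closedBall, dist_zero_right] at this
      linarith
    by_contra hcon
    exact this (support_fderiv_subset ℝ (Function.mem_support.2 hcon))
  have hbound : ∀ y, ‖P (fderiv ℝ f y) (u (x - y) - u x)‖ ≤ ‖fderiv ℝ f y‖ * (K * M) := by
    intro y
    by_cases hy : fderiv ℝ f y = 0
    · rw [hy, P.map_zero]
      simp
    have hyε : ‖y‖ ≤ ε := by
      by_contra hcon
      push_neg at hcon
      exact hy (hsupp' y hcon)
    have hdiff : ‖u (x - y) - u x‖ ≤ K * M := by
      rcases eq_or_ne y 0 with rfl | hy0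
      · simpa using hKM
      · have hy0' : 0 < ‖y‖ := norm_pos_iff.2 hy0
        have hxy : ‖(x - y) - x‖ = ‖y‖ := by rw [sub_sub_cancel_left, norm_neg]
        have h := hu_holog (x - y) x (by rw [hxy]; exact hy0')
          (by rw [hxy]; exact lt_of_le_of_lt hyε hε1)
        rw [hxy] at h
        refine h.trans (mul_le_mul_of_nonneg_left ?_ hK)
        have h1 : Real.log (1 / ε) ≤ Real.log (1 / ‖y‖) :=
          Real.log_le_log (by positivity) (one_div_le_one_div_of_le hy0' hyε)
        have h2 : (Real.log (1 / ‖y‖)) ^ (-lam) ≤ (Real.log (1 / ε)) ^ (-lam) :=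
          Real.rpow_le_rpow_of_nonpos hlog h1 (by linarith)
        have h3 : ‖y‖ ^ α ≤ ε ^ α := Real.rpow_le_rpow (norm_nonneg _) hyε hα0
        exact mul_le_mul h2 h3 (Real.rpow_nonneg (norm_nonneg _) _)
          (Real.rpow_nonneg hlog.le _)
    have hPTv : ‖P (fderiv ℝ f y) (u (x - y) - u x)‖
        ≤ ‖fderiv ℝ f y‖ * ‖u (x - y) - u x‖ := by
      refine ContinuousLinearMap.opNorm_le_bound _
        (mul_nonneg (norm_nonneg _) (norm_nonneg _)) fun w => ?_
      have hw : P (fderiv ℝ f y) (u (x - y) - u x) w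
          = (fderiv ℝ f y w) • (u (x - y) - u x) := rfl
      rw [hw, norm_smul]
      have hT := (fderiv ℝ f y).le_opNorm w
      nlinarith [norm_nonneg (u (x - y) - u x), norm_nonneg w,
        norm_nonneg (fderiv ℝ f y w), norm_nonneg (fderiv ℝ f y)]
    refine le_trans hPTv ?_
    exact mul_le_mul_of_nonneg_left hdiff (norm_nonneg _)
  -- integral of the norm of `f'`
  have hnorm_f' : ∀ y, ‖fderiv ℝ f y‖ = ((ε ^ n)⁻¹ * ε⁻¹) * ‖fderiv ℝ φ (ε⁻¹ • y)‖ := by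
    intro y
    rw [hf' y, norm_smul, Real.norm_eq_abs, abs_of_pos (by positivity)]
  have hintf' : ∫ y, ‖fderiv ℝ f y‖ = ε⁻¹ * ∫ z, ‖fderiv ℝ φ z‖ := by
    simp only [hnorm_f']
    rw [integral_const_mul,
      Measure.integral_comp_inv_smul_of_nonneg volume (fun z => ‖fderiv ℝ φ z‖) hε0.le,
      finrank_euclideanSpace_fin, smul_eq_mul]
    field_simp
  have hInorm : Integrable (fun y => ‖fderiv ℝ f y‖ * (K * M)) :=
    (hf'cont.norm.integrable_of_hasCompactSupport hcs'.norm).mul_const _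
  -- final estimate
  have hC' : 0 ≤ ∫ z, ‖fderiv ℝ φ z‖ := integral_nonneg fun z => norm_nonneg _
  calc ‖fderiv ℝ (mollConv φ ε u) x‖
      = ‖∫ y, P (fderiv ℝ f y) (u (x - y) - u x)‖ := by rw [hdx]
    _ ≤ ∫ y, ‖P (fderiv ℝ f y) (u (x - y) - u x)‖ := norm_integral_le_integral_norm _
    _ ≤ ∫ y, ‖fderiv ℝ f y‖ * (K * M) := by
        refine integral_mono ?_ hInorm hbound
        have : (fun y => ‖P (fderiv ℝ f y) (u (x - y) - u x)‖)
            = fun y => ‖P (fderiv ℝ f y) (u (x - y)) - P (fderiv ℝ f y) (u x)‖ := by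
          funext y; rw [map_sub]
        rw [this]
        exact (hI1.sub hI2).norm
    _ = (∫ y, ‖fderiv ℝ f y‖) * (K * M) := integral_mul_const _ _
    _ = (ε⁻¹ * ∫ z, ‖fderiv ℝ φ z‖) * (K * M) := by rw [hintf']
    _ ≤ (∫ z, ‖fderiv ℝ φ z‖) * ((Real.log (1 / ε)) ^ (-lam) * ε ^ (α - 1) * K) := by
        apply le_of_eq
        rw [hM_def, Real.rpow_sub hε0, Real.rpow_one]
        ring
end

section
/- Let 0 ≤ α < 1, λ > 0, L ≥ 0, h > 0. Let θ : ℝⁿ → [0,1] satisfy |θ(x) − θ(y)| ≤ (L/h)|x − y| for all x, y, and let u : ℝⁿ → ℝⁿ be bounded continuous with finite Hölog seminorm [u]_{C^{0,α}_λ(ℝⁿ)}. Then for every 0 < ε < 1 and every x ∈ ℝⁿ, |∇(θu)^ε(x)| ≤ C ε^{−1} ( (log(1/ε))^{−λ} ε^α [u]_{C^{0,α}_λ(ℝⁿ)} + (εL/h) sup|u| ), where C = ∫_{ℝⁿ} |∇φ(z)| dz depends only on the mollifier φ. -/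
open MeasureTheory Real Set

set_option maxHeartbeats 1000000

/-- gradient estimate for the mollification of a cutoff field:
`|∇(θu)^ε(x)| ≤ C ε⁻¹ ((log(1/ε))^{−λ} ε^α [u]_{C^{0,α}_λ} + (εL/h) sup|u|)`
with `C = ∫ |∇φ|`. -/
theorem mollification_gradient_cutoff_holog
    (n : ℕ) (α lam : ℝ) (hα0 : 0 ≤ α) (hα1 : α < 1) (hlam : 0 < lam)
    (L h : ℝ) (hL : 0 ≤ L) (hh : 0 < h)
    (θ : EuclideanSpace ℝ (Fin n) → ℝ)
    (hθ01 : ∀ x, 0 ≤ θ x ∧ θ x ≤ 1)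
    (hθ_lip : ∀ x y, |θ x - θ y| ≤ L / h * ‖x - y‖)
    (u : EuclideanSpace ℝ (Fin n) → EuclideanSpace ℝ (Fin n))
    (hu_cont : Continuous u) (B : ℝ) (hu_bdd : ∀ x, ‖u x‖ ≤ B)
    (K : ℝ)
    (hu_holog : ∀ x y : EuclideanSpace ℝ (Fin n), 0 < ‖x - y‖ → ‖x - y‖ < 1 →
      ‖u x - u y‖ ≤ K * ((Real.log (1 / ‖x - y‖)) ^ (-lam) * ‖x - y‖ ^ α))
    (φ : EuclideanSpace ℝ (Fin n) → ℝ)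
    (hφ_smooth : ContDiff ℝ (⊤ : ℕ∞) φ) (hφ_nonneg : ∀ x, 0 ≤ φ x)
    (hφ_supp : ∀ x, 1 < ‖x‖ → φ x = 0)
    (hφ_rad : ∀ x y, ‖x‖ = ‖y‖ → φ x = φ y)
    (hφ_int : ∫ x, φ x = 1)
    (ε : ℝ) (hε0 : 0 < ε) (hε1 : ε < 1) :
    Differentiable ℝ (mollConv φ ε (fun z => θ z • u z)) ∧
      ∀ x, ‖fderiv ℝ (mollConv φ ε (fun z => θ z • u z)) x‖ ≤
        (∫ z, ‖fderiv ℝ φ z‖) * ε⁻¹ *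
          ((Real.log (1 / ε)) ^ (-lam) * ε ^ α * K + ε * L / h * B) := by
  classical
  -- trivial case n = 0
  rcases Nat.eq_zero_or_pos n with hn | hn
  · subst hn
    haveI : Subsingleton (EuclideanSpace ℝ (Fin 0)) := by
      constructor; intro a b; ext i; exact absurd i.2 (by omega)
    have hclm : ∀ (T : EuclideanSpace ℝ (Fin 0) →L[ℝ] ℝ), T = 0 := by
      intro T; ext v; rw [Subsingleton.elim v 0]; simp
    have hclm' : ∀ (T : EuclideanSpace ℝ (Fin 0) →L[ℝ] EuclideanSpace ℝ (Fin 0)), T = 0 := by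
      intro T; ext v; rw [Subsingleton.elim v 0]; simp
    constructor
    · have : (mollConv φ ε fun z => θ z • u z)
          = fun _ => (mollConv φ ε fun z => θ z • u z) 0 := by
        funext x; rw [Subsingleton.elim x 0]
      rw [this]; exact differentiable_const _
    · intro x
      have h1 : fderiv ℝ (mollConv φ ε fun z => θ z • u z) x = 0 := hclm' _
      have h2 : (∫ z, ‖fderiv ℝ φ z‖) = 0 := by
        have hz : ∀ z : EuclideanSpace ℝ (Fin 0), ‖fderiv ℝ φ z‖ = 0 := fun z => by
          rw [hclm (fderiv ℝ φ z)]; simp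
        simp [hz]
      rw [h1, h2, norm_zero, zero_mul, zero_mul]
  -- main case n ≥ 1
  have hK : 0 ≤ K := by
    set y : EuclideanSpace ℝ (Fin n) := EuclideanSpace.single ⟨0, hn⟩ (1/2 : ℝ) with hy
    have hny : ‖(0 : EuclideanSpace ℝ (Fin n)) - y‖ = 1/2 := by
      rw [zero_sub, norm_neg, hy, EuclideanSpace.norm_single]
      norm_num
    have h1 := hu_holog 0 y (by rw [hny]; norm_num) (by rw [hny]; norm_num)
    have hpos : 0 < Real.log (1 / ‖(0 : EuclideanSpace ℝ (Fin n)) - y‖) ^ (-lam)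
        * ‖(0 : EuclideanSpace ℝ (Fin n)) - y‖ ^ α := by
      rw [hny]
      exact mul_pos (Real.rpow_pos_of_pos (Real.log_pos (by norm_num)) _)
        (Real.rpow_pos_of_pos (by norm_num) _)
    have h0 : (0:ℝ) ≤ K * (Real.log (1 / ‖(0 : EuclideanSpace ℝ (Fin n)) - y‖) ^ (-lam)
        * ‖(0 : EuclideanSpace ℝ (Fin n)) - y‖ ^ α) := le_trans (norm_nonneg _) h1
    exact le_of_not_gt fun hKneg => absurd h0 (not_le.mpr (mul_neg_of_neg_of_pos hKneg hpos))
  have hB : 0 ≤ B := le_trans (norm_nonneg (u 0)) (hu_bdd 0)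
  set f : EuclideanSpace ℝ (Fin n) → ℝ := moll n φ ε with hf
  set g : EuclideanSpace ℝ (Fin n) → EuclideanSpace ℝ (Fin n) := fun z => θ z • u z with hg
  have hθ_cont : Continuous θ := by
    have hl : LipschitzWith ⟨L/h, div_nonneg hL hh.le⟩ θ :=
      LipschitzWith.of_dist_le_mul fun x y => by
        rw [Real.dist_eq, dist_eq_norm]; exact hθ_lip x y
    exact hl.continuous
  have hg_cont : Continuous g := hθ_cont.smul hu_cont
  have hg_bdd : ∀ z, ‖g z‖ ≤ B := by
    intro z
    calc ‖θ z • u z‖ = |θ z| * ‖u z‖ := by rw [norm_smul, Real.norm_eq_abs]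
    _ ≤ 1 * B := by
        apply mul_le_mul _ (hu_bdd z) (norm_nonneg _) zero_le_one
        rw [abs_of_nonneg (hθ01 z).1]; exact (hθ01 z).2
    _ = B := one_mul B
  have hφ_cont : Continuous φ := hφ_smooth.continuous
  have hsm2 : ContDiff ℝ (⊤ : ℕ∞) (fun y : EuclideanSpace ℝ (Fin n) => ε⁻¹ • y) :=
    contDiff_id.const_smul ε⁻¹
  have hf_smooth : ContDiff ℝ (⊤ : ℕ∞) f := contDiff_const.mul (hφ_smooth.comp hsm2)
  have hf0 : ∀ t : EuclideanSpace ℝ (Fin n), ε < ‖t‖ → f t = 0 := by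
    intro t ht
    have h1 : 1 < ‖ε⁻¹ • t‖ := by
      rw [norm_smul, norm_inv, Real.norm_eq_abs, abs_of_pos hε0]
      have := mul_lt_mul_of_pos_left ht (inv_pos.mpr hε0)
      rwa [inv_mul_cancel₀ hε0.ne'] at this
    simp only [hf, moll, hφ_supp _ h1, mul_zero]
  have hf_supp : HasCompactSupport f :=
    HasCompactSupport.intro (isCompact_closedBall (0 : EuclideanSpace ℝ (Fin n)) ε)
      fun t ht => hf0 t (by simpa [dist_eq_norm] using ht)
  have hdf0 : ∀ t : EuclideanSpace ℝ (Fin n), ε < ‖t‖ → fderiv ℝ f t = 0 := by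
    intro t ht
    have hev : f =ᶠ[nhds t] (fun _ => (0:ℝ)) := by
      have hopen : IsOpen {z : EuclideanSpace ℝ (Fin n) | ε < ‖z‖} :=
        isOpen_lt continuous_const continuous_norm
      filter_upwards [hopen.mem_nhds ht] with z hz using hf0 z hz
    rw [hev.fderiv_eq]; simp
  have hf_cont : Continuous f := hf_smooth.continuous
  have hf_int : Integrable f := hf_cont.integrable_of_hasCompactSupport hf_supp
  set Lb : ℝ →L[ℝ] EuclideanSpace ℝ (Fin n) →L[ℝ] EuclideanSpace ℝ (Fin n) :=
    ContinuousLinearMap.lsmul ℝ ℝ with hLb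
  have hconv_eq : mollConv φ ε g = convolution f g Lb volume := by
    funext x; rw [convolution_def]; rfl
  -- formula for fderiv of f
  have hdf : ∀ t : EuclideanSpace ℝ (Fin n),
      fderiv ℝ f t = ((ε ^ n)⁻¹ * ε⁻¹) • fderiv ℝ φ (ε⁻¹ • t) := by
    intro t
    set A : EuclideanSpace ℝ (Fin n) →L[ℝ] EuclideanSpace ℝ (Fin n) :=
      ε⁻¹ • ContinuousLinearMap.id ℝ (EuclideanSpace ℝ (Fin n)) with hA
    have hA' : HasFDerivAt (fun y : EuclideanSpace ℝ (Fin n) => ε⁻¹ • y) A t :=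
      A.hasFDerivAt
    have hφd : HasFDerivAt φ (fderiv ℝ φ (ε⁻¹ • t)) (ε⁻¹ • t) :=
      (hφ_smooth.differentiable (by simp) (ε⁻¹ • t)).hasFDerivAt
    have hcomp := hφd.comp t hA'
    have hmul := hcomp.const_mul ((ε ^ n)⁻¹)
    have hfd : HasFDerivAt f ((ε ^ n)⁻¹ • ((fderiv ℝ φ (ε⁻¹ • t)).comp A)) t := hmul
    rw [hfd.fderiv]
    have hAcomp : (fderiv ℝ φ (ε⁻¹ • t)).comp A = ε⁻¹ • fderiv ℝ φ (ε⁻¹ • t) := by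
      ext v
      simp [hA, _root_.map_smul]
    rw [hAcomp, smul_smul]
  have hndf : ∀ t : EuclideanSpace ℝ (Fin n),
      ‖fderiv ℝ f t‖ = (ε ^ n)⁻¹ * ε⁻¹ * ‖fderiv ℝ φ (ε⁻¹ • t)‖ := by
    intro t
    rw [hdf t, norm_smul, Real.norm_eq_abs, abs_of_pos (by positivity)]
  have hdf_cont : Continuous (fderiv ℝ f) := hf_smooth.continuous_fderiv (by simp)
  have hdf_int : Integrable (fun t => ‖fderiv ℝ f t‖) :=
    hdf_cont.norm.integrable_of_hasCompactSupport (hf_supp.fderiv ℝ).norm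
  -- the scaling identity for the integral of ‖fderiv f‖
  have hCint : (∫ t, ‖fderiv ℝ f t‖) = ε⁻¹ * ∫ z, ‖fderiv ℝ φ z‖ := by
    have h1 : (∫ t, ‖fderiv ℝ f t‖)
        = ∫ t, (ε ^ n)⁻¹ * ε⁻¹ * ‖fderiv ℝ φ (ε⁻¹ • t)‖ := by
      congr 1; funext t; exact hndf t
    rw [h1, integral_const_mul]
    have h2 := MeasureTheory.Measure.integral_comp_smul (volume : Measure (EuclideanSpace ℝ (Fin n)))
      (fun z => ‖fderiv ℝ φ z‖) ε⁻¹
    rw [finrank_euclideanSpace_fin] at h2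
    rw [h2, smul_eq_mul]
    have h3 : |((ε⁻¹) ^ n)⁻¹| = ε ^ n := by
      rw [← inv_pow, inv_inv, abs_of_pos (by positivity)]
    rw [h3]
    field_simp
  -- bound constant
  set M : ℝ := (Real.log (1 / ε)) ^ (-lam) * ε ^ α * K + ε * L / h * B with hM
  have hlog : 0 < Real.log (1 / ε) := Real.log_pos (one_lt_one_div hε0 hε1)
  have hM0 : 0 ≤ M := by
    apply add_nonneg
    · exact mul_nonneg (mul_nonneg (Real.rpow_nonneg hlog.le _) (Real.rpow_nonneg hε0.le _)) hK
    · exact mul_nonneg (div_nonneg (mul_nonneg hε0.le hL) hh.le) hB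
  -- the key pointwise increment estimate
  have hgdiff : ∀ (x₀ t : EuclideanSpace ℝ (Fin n)), ‖t‖ ≤ ε →
      ‖g (x₀ - t) - g x₀‖ ≤ M := by
    intro x₀ t hte
    rcases eq_or_ne t 0 with rfl | ht0
    · simpa using hM0
    have htpos : 0 < ‖t‖ := norm_pos_iff.mpr ht0
    have htlt1 : ‖t‖ < 1 := lt_of_le_of_lt hte hε1
    have hnorm_sub : ‖(x₀ - t) - x₀‖ = ‖t‖ := by
      have : (x₀ - t) - x₀ = -t := by abel
      rw [this, norm_neg]
    have hdecomp : g (x₀ - t) - g x₀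
        = θ (x₀ - t) • (u (x₀ - t) - u x₀) + (θ (x₀ - t) - θ x₀) • u x₀ := by
      simp only [hg, smul_sub, sub_smul]; abel
    have hterm1 : |θ (x₀ - t)| * ‖u (x₀ - t) - u x₀‖
        ≤ 1 * (K * ((Real.log (1 / ε)) ^ (-lam) * ε ^ α)) := by
      have hu1 : ‖u (x₀ - t) - u x₀‖ ≤ K * ((Real.log (1 / ‖t‖)) ^ (-lam) * ‖t‖ ^ α) := by
        have := hu_holog (x₀ - t) x₀ (by rw [hnorm_sub]; exact htpos)
          (by rw [hnorm_sub]; exact htlt1)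
        rwa [hnorm_sub] at this
      have hA1 : ‖t‖ ^ α ≤ ε ^ α := Real.rpow_le_rpow (norm_nonneg t) hte hα0
      have hA2 : (Real.log (1 / ‖t‖)) ^ (-lam) ≤ (Real.log (1 / ε)) ^ (-lam) := by
        apply Real.rpow_le_rpow_of_nonpos hlog
        · apply Real.log_le_log (by positivity)
          exact one_div_le_one_div_of_le htpos hte
        · exact neg_nonpos.mpr hlam.le
      have hu2 : K * ((Real.log (1 / ‖t‖)) ^ (-lam) * ‖t‖ ^ α)
          ≤ K * ((Real.log (1 / ε)) ^ (-lam) * ε ^ α) := by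
        apply mul_le_mul_of_nonneg_left _ hK
        exact mul_le_mul hA2 hA1 (Real.rpow_nonneg (norm_nonneg t) _)
          (Real.rpow_nonneg hlog.le _)
      have habs : |θ (x₀ - t)| ≤ 1 := by
        rw [abs_of_nonneg (hθ01 _).1]; exact (hθ01 _).2
      exact mul_le_mul habs (le_trans hu1 hu2) (norm_nonneg _) zero_le_one
    have hterm2 : |θ (x₀ - t) - θ x₀| * ‖u x₀‖ ≤ (L / h * ε) * B := by
      apply mul_le_mul _ (hu_bdd x₀) (norm_nonneg _)
        (mul_nonneg (div_nonneg hL hh.le) hε0.le)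
      calc |θ (x₀ - t) - θ x₀| ≤ L / h * ‖(x₀ - t) - x₀‖ := hθ_lip _ _
      _ = L / h * ‖t‖ := by rw [hnorm_sub]
      _ ≤ L / h * ε := mul_le_mul_of_nonneg_left hte (div_nonneg hL hh.le)
    calc ‖g (x₀ - t) - g x₀‖
        ≤ |θ (x₀ - t)| * ‖u (x₀ - t) - u x₀‖ + |θ (x₀ - t) - θ x₀| * ‖u x₀‖ := by
          rw [hdecomp]
          refine le_trans (norm_add_le _ _) ?_
          rw [norm_smul, norm_smul, Real.norm_eq_abs, Real.norm_eq_abs]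
    _ ≤ 1 * (K * ((Real.log (1 / ε)) ^ (-lam) * ε ^ α)) + (L / h * ε) * B :=
        add_le_add hterm1 hterm2
    _ = M := by rw [hM]; ring
  -- the derivative of the convolution at each point
  have key : ∀ x₀ : EuclideanSpace ℝ (Fin n), HasFDerivAt (mollConv φ ε g)
      (convolution (fderiv ℝ f) (fun z => g z - g x₀)
        (Lb.precompL (EuclideanSpace ℝ (Fin n))) volume x₀) x₀ := by
    intro x₀
    have hgt_loc : LocallyIntegrable (fun z => g z - g x₀) volume :=
      (hg_cont.sub continuous_const).locallyIntegrable
    have hD := hf_supp.hasFDerivAt_convolution_left Lb (hf_smooth.of_le (by simp)) hgt_loc x₀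
    have heq : convolution f g Lb volume
        = fun y => convolution f (fun z => g z - g x₀) Lb volume y + (∫ t, f t) • g x₀ := by
      funext y
      rw [convolution_def, convolution_def]
      have I1 : Integrable (fun t => f t • g (y - t)) := by
        apply Continuous.integrable_of_hasCompactSupport
          (hf_cont.smul (hg_cont.comp (continuous_const.sub continuous_id)))
        exact HasCompactSupport.intro (isCompact_closedBall (0 : EuclideanSpace ℝ (Fin n)) ε)
          fun t ht => by show f t • g (y - t) = 0; rw [hf0 t (by simpa [dist_eq_norm] using ht), zero_smul]
      have I2 : Integrable (fun t => f t • g x₀) := hf_int.smul_const (g x₀)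
      have e1 : ∀ t : EuclideanSpace ℝ (Fin n),
          Lb (f t) (g (y - t) - g x₀) = f t • g (y - t) - f t • g x₀ := by
        intro t; simp [hLb, smul_sub]
      simp only [e1]
      rw [integral_sub I1 I2, integral_smul_const]
      simp only [hLb, ContinuousLinearMap.lsmul_apply]
      abel
    rw [hconv_eq, heq]
    exact hD.add_const _
  refine ⟨fun x₀ => (key x₀).differentiableAt, fun x₀ => ?_⟩
  rw [(key x₀).fderiv]
  -- norm estimate for the derivative
  have hptw : ∀ t : EuclideanSpace ℝ (Fin n),
      ‖(Lb.precompL (EuclideanSpace ℝ (Fin n))) (fderiv ℝ f t) (g (x₀ - t) - g x₀)‖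
        ≤ ‖fderiv ℝ f t‖ * M := by
    intro t
    by_cases hte : ‖t‖ ≤ ε
    · calc ‖(Lb.precompL (EuclideanSpace ℝ (Fin n))) (fderiv ℝ f t) (g (x₀ - t) - g x₀)‖
          ≤ ‖Lb.precompL (EuclideanSpace ℝ (Fin n))‖ * ‖fderiv ℝ f t‖
            * ‖g (x₀ - t) - g x₀‖ := ContinuousLinearMap.le_opNorm₂ _ _ _
      _ ≤ 1 * ‖fderiv ℝ f t‖ * ‖g (x₀ - t) - g x₀‖ := by
          apply mul_le_mul_of_nonneg_right _ (norm_nonneg _)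
          exact mul_le_mul_of_nonneg_right
            (le_trans (ContinuousLinearMap.norm_precompL_le _ Lb)
              (ContinuousLinearMap.opNorm_lsmul_le)) (norm_nonneg _)
      _ = ‖fderiv ℝ f t‖ * ‖g (x₀ - t) - g x₀‖ := by rw [one_mul]
      _ ≤ ‖fderiv ℝ f t‖ * M :=
          mul_le_mul_of_nonneg_left (hgdiff x₀ t hte) (norm_nonneg _)
    · rw [hdf0 t (not_le.mp hte)]
      rw [ContinuousLinearMap.map_zero, ContinuousLinearMap.zero_apply, norm_zero, norm_zero, zero_mul]
  rw [convolution_def]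
  refine le_trans (norm_integral_le_of_norm_le (hdf_int.mul_const M)
    (ae_of_all _ fun t => hptw t)) ?_
  rw [integral_mul_const, hCint]
  ring_nf
  exact le_refl _
end

section
/- Let 0 ≤ α < 1, λ > 0, L ≥ 0, h > 0. Let θ : ℝⁿ → [0,1] satisfy |θ(x) − θ(y)| ≤ (L/h)|x − y| for all x, y, and let u : ℝⁿ → ℝⁿ be bounded continuous with finite Hölog seminorm [u]_{C^{0,α}_λ(ℝⁿ)}. Then for every 0 < ε < 1 and every x ∈ ℝⁿ, | ∫_{ℝⁿ} (δ_y u ⊗ δ_y(θu))(x) φ_ε(y) dy | ≤ (log(1/ε))^{−λ} ε^α [u]_{C^{0,α}_λ(ℝⁿ)} · ( (log(1/ε))^{−λ} ε^α [u]_{C^{0,α}_λ(ℝⁿ)} + (εL/h) sup|u| ), where δ_y v(x) = v(x−y) − v(x). -/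
open MeasureTheory Real Set

lemma coord_abs_le_norm {n : ℕ} (v : EuclideanSpace ℝ (Fin n)) (i : Fin n) :
    |v i| ≤ ‖v‖ := by
  rw [EuclideanSpace.norm_eq]
  have h1 : |v i| = Real.sqrt (‖v i‖ ^ 2) := by
    rw [Real.sqrt_sq_eq_abs, Real.norm_eq_abs, abs_abs]
  rw [h1]
  apply Real.sqrt_le_sqrt
  exact Finset.single_le_sum (f := fun k => ‖v k‖ ^ 2) (fun k _ => sq_nonneg _)
    (Finset.mem_univ i)

/-- mixed quadratic increment estimate for a cutoff field, stated
entrywise: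
`|∫ (δ_y u ⊗ δ_y(θu))(x) φ_ε(y) dy| ≤
  (log(1/ε))^{−λ} ε^α [u] ((log(1/ε))^{−λ} ε^α [u] + (εL/h) sup|u|)`. -/
theorem mixed_increment_estimate_cutoff_holog
    (n : ℕ) (α lam : ℝ) (hα0 : 0 ≤ α) (hα1 : α < 1) (hlam : 0 < lam)
    (L h : ℝ) (hL : 0 ≤ L) (hh : 0 < h)
    (θ : EuclideanSpace ℝ (Fin n) → ℝ)
    (hθ01 : ∀ x, 0 ≤ θ x ∧ θ x ≤ 1)
    (hθ_lip : ∀ x y, |θ x - θ y| ≤ L / h * ‖x - y‖)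
    (u : EuclideanSpace ℝ (Fin n) → EuclideanSpace ℝ (Fin n))
    (hu_cont : Continuous u) (B : ℝ) (hu_bdd : ∀ x, ‖u x‖ ≤ B)
    (K : ℝ)
    (hu_holog : ∀ x y : EuclideanSpace ℝ (Fin n), 0 < ‖x - y‖ → ‖x - y‖ < 1 →
      ‖u x - u y‖ ≤ K * ((Real.log (1 / ‖x - y‖)) ^ (-lam) * ‖x - y‖ ^ α))
    (φ : EuclideanSpace ℝ (Fin n) → ℝ)
    (hφ_smooth : ContDiff ℝ (⊤ : ℕ∞) φ) (hφ_nonneg : ∀ x, 0 ≤ φ x)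
    (hφ_supp : ∀ x, 1 < ‖x‖ → φ x = 0)
    (hφ_rad : ∀ x y, ‖x‖ = ‖y‖ → φ x = φ y)
    (hφ_int : ∫ x, φ x = 1)
    (ε : ℝ) (hε0 : 0 < ε) (hε1 : ε < 1) :
    ∀ (x : EuclideanSpace ℝ (Fin n)) (i j : Fin n),
      |∫ y, moll n φ ε y *
          ((u (x - y) i - u x i) * (θ (x - y) * u (x - y) j - θ x * u x j))|
        ≤ (Real.log (1 / ε)) ^ (-lam) * ε ^ α * K *
            ((Real.log (1 / ε)) ^ (-lam) * ε ^ α * K + ε * L / h * B) := by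
  intro x i j
  rcases Nat.eq_zero_or_pos n with hn0 | hn
  · subst hn0; exact i.elim0
  -- basic positivity facts
  have hεinv : (1 : ℝ) < 1 / ε := (one_lt_div hε0).mpr hε1
  have hlog : 0 < Real.log (1 / ε) := Real.log_pos hεinv
  have hP : 0 < (Real.log (1 / ε)) ^ (-lam) := Real.rpow_pos_of_pos hlog _
  have hQ : 0 < ε ^ α := Real.rpow_pos_of_pos hε0 _
  have hB : 0 ≤ B := le_trans (norm_nonneg (u 0)) (hu_bdd 0)
  -- K ≥ 0
  have hK : 0 ≤ K := by
    set e : EuclideanSpace ℝ (Fin n) := EuclideanSpace.single ⟨0, hn⟩ ε with he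
    have hne : ‖e - 0‖ = ε := by
      rw [sub_zero, he, EuclideanSpace.norm_single, Real.norm_eq_abs, abs_of_pos hε0]
    have h1 := hu_holog e 0 (by rw [hne]; exact hε0) (by rw [hne]; exact hε1)
    rw [hne] at h1
    have h2 : 0 < (Real.log (1 / ε)) ^ (-lam) * ε ^ α := mul_pos hP hQ
    nlinarith [norm_nonneg (u e - u 0)]
  set C1 : ℝ := (Real.log (1 / ε)) ^ (-lam) * ε ^ α * K with hC1
  set C2 : ℝ := C1 + ε * L / h * B with hC2
  have hC1nn : 0 ≤ C1 := by positivity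
  have hC2nn : 0 ≤ C2 := by positivity
  -- key increment estimate
  have key : ∀ y : EuclideanSpace ℝ (Fin n), ‖y‖ ≤ ε → ‖u (x - y) - u x‖ ≤ C1 := by
    intro y hy
    rcases eq_or_lt_of_le (norm_nonneg y) with h0 | h0
    · have : y = 0 := by rwa [eq_comm, norm_eq_zero] at h0
      simp [this, hC1nn]
    · have hxy : ‖(x - y) - x‖ = ‖y‖ := by rw [sub_sub_cancel_left, norm_neg]
      have h1 := hu_holog (x - y) x (by rw [hxy]; exact h0) (by rw [hxy]; exact lt_of_le_of_lt hy hε1)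
      rw [hxy] at h1
      refine h1.trans ?_
      have hlog2 : Real.log (1 / ε) ≤ Real.log (1 / ‖y‖) :=
        Real.log_le_log (by positivity) (one_div_le_one_div_of_le h0 hy)
      have hA : (Real.log (1 / ‖y‖)) ^ (-lam) ≤ (Real.log (1 / ε)) ^ (-lam) :=
        Real.rpow_le_rpow_of_nonpos hlog hlog2 (by linarith)
      have hBn : ‖y‖ ^ α ≤ ε ^ α := Real.rpow_le_rpow (norm_nonneg y) hy hα0
      have hinner : (Real.log (1 / ‖y‖)) ^ (-lam) * ‖y‖ ^ α ≤
          (Real.log (1 / ε)) ^ (-lam) * ε ^ α :=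
        mul_le_mul hA hBn (Real.rpow_nonneg (norm_nonneg y) α) hP.le
      calc K * ((Real.log (1 / ‖y‖)) ^ (-lam) * ‖y‖ ^ α)
          ≤ K * ((Real.log (1 / ε)) ^ (-lam) * ε ^ α) :=
            mul_le_mul_of_nonneg_left hinner hK
        _ = C1 := by rw [hC1]; ring
  -- mollifier nonneg
  have hmoll_nn : ∀ y, 0 ≤ moll n φ ε y := by
    intro y
    exact mul_nonneg (by positivity) (hφ_nonneg _)
  -- pointwise bound on the integrand
  set f : EuclideanSpace ℝ (Fin n) → ℝ := fun y => moll n φ ε y *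
      ((u (x - y) i - u x i) * (θ (x - y) * u (x - y) j - θ x * u x j)) with hf
  have hbound : ∀ y, |f y| ≤ moll n φ ε y * (C1 * C2) := by
    intro y
    rcases le_or_gt ‖y‖ ε with hy | hy
    · -- inside the ball
      have hδ : ‖u (x - y) - u x‖ ≤ C1 := key y hy
      have hδi : |u (x - y) i - u x i| ≤ C1 := by
        have := coord_abs_le_norm (u (x - y) - u x) i
        simp only [PiLp.sub_apply] at this
        exact this.trans hδ
      have hδj : |u (x - y) j - u x j| ≤ C1 := by
        have := coord_abs_le_norm (u (x - y) - u x) j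
        simp only [PiLp.sub_apply] at this
        exact this.trans hδ
      have hb : |θ (x - y) * u (x - y) j - θ x * u x j| ≤ C2 := by
        have hsplit : θ (x - y) * u (x - y) j - θ x * u x j =
            θ (x - y) * (u (x - y) j - u x j) + (θ (x - y) - θ x) * u x j := by ring
        rw [hsplit]
        refine (abs_add_le _ _).trans ?_
        rw [hC2]
        gcongr
        · rw [abs_mul]
          calc |θ (x - y)| * |u (x - y) j - u x j|
              ≤ 1 * C1 := by
                refine mul_le_mul ?_ hδj (abs_nonneg _) zero_le_one
                rw [abs_of_nonneg (hθ01 _).1]; exact (hθ01 _).2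
            _ = C1 := one_mul _
        · rw [abs_mul]
          have h1 : |θ (x - y) - θ x| ≤ L / h * ε := by
            refine (hθ_lip (x - y) x).trans ?_
            have : ‖(x - y) - x‖ = ‖y‖ := by rw [sub_sub_cancel_left, norm_neg]
            rw [this]
            exact mul_le_mul_of_nonneg_left hy (by positivity)
          have h2 : |u x j| ≤ B := (coord_abs_le_norm (u x) j).trans (hu_bdd x)
          calc |θ (x - y) - θ x| * |u x j| ≤ (L / h * ε) * B :=
                mul_le_mul h1 h2 (abs_nonneg _) (by positivity)
            _ = ε * L / h * B := by ring
      rw [hf, abs_mul, abs_of_nonneg (hmoll_nn y)]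
      refine mul_le_mul_of_nonneg_left ?_ (hmoll_nn y)
      rw [abs_mul]
      exact mul_le_mul hδi hb (abs_nonneg _) hC1nn
    · -- outside the ball: mollifier vanishes
      have hφ0 : φ (ε⁻¹ • y) = 0 := by
        apply hφ_supp
        rw [norm_smul, Real.norm_eq_abs, abs_of_pos (inv_pos.mpr hε0)]
        rw [lt_div_iff₀ hε0] at *
        calc (1 : ℝ) = ε⁻¹ * ε := by field_simp
          _ < ε⁻¹ * ‖y‖ := by
            exact mul_lt_mul_of_pos_left hy (inv_pos.mpr hε0)
      have hm0 : moll n φ ε y = 0 := by rw [moll, hφ0, mul_zero]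
      simp [hf, hm0]
  -- integrability of the dominating function
  have hmoll_cont : Continuous (moll n φ ε) := by
    unfold moll
    exact continuous_const.mul (hφ_smooth.continuous.comp (continuous_const_smul _))
  have hmoll_supp : HasCompactSupport (moll n φ ε) := by
    apply HasCompactSupport.intro (isCompact_closedBall (0 : EuclideanSpace ℝ (Fin n)) ε)
    intro y hy
    simp only [Metric.mem_closedBall, dist_zero_right, not_le] at hy
    have hφ0 : φ (ε⁻¹ • y) = 0 := by
      apply hφ_supp
      rw [norm_smul, Real.norm_eq_abs, abs_of_pos (inv_pos.mpr hε0)]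
      calc (1 : ℝ) = ε⁻¹ * ε := by field_simp
        _ < ε⁻¹ * ‖y‖ := mul_lt_mul_of_pos_left hy (inv_pos.mpr hε0)
    rw [moll, hφ0, mul_zero]
  have hmoll_integrable : Integrable (moll n φ ε) :=
    hmoll_cont.integrable_of_hasCompactSupport hmoll_supp
  have hg_integrable : Integrable (fun y => moll n φ ε y * (C1 * C2)) :=
    hmoll_integrable.mul_const _
  -- integral of mollifier is 1
  have hmoll_one : ∫ y, moll n φ ε y = 1 := by
    unfold moll
    rw [integral_const_mul, MeasureTheory.Measure.integral_comp_smul volume φ ε⁻¹, hφ_int]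
    have hfr : Module.finrank ℝ (EuclideanSpace ℝ (Fin n)) = n := finrank_euclideanSpace_fin
    rw [hfr, smul_eq_mul, mul_one, inv_pow, inv_inv, abs_of_pos (pow_pos hε0 n)]
    field_simp
  -- conclude
  calc |∫ y, moll n φ ε y *
          ((u (x - y) i - u x i) * (θ (x - y) * u (x - y) j - θ x * u x j))|
      ≤ ∫ y, |f y| := by
        rw [← Real.norm_eq_abs]
        refine (norm_integral_le_integral_norm f).trans_eq ?_
        simp [Real.norm_eq_abs]
    _ ≤ ∫ y, moll n φ ε y * (C1 * C2) := by
        refine integral_mono_of_nonneg ?_ hg_integrable ?_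
        · exact Filter.Eventually.of_forall fun y => abs_nonneg _
        · exact Filter.Eventually.of_forall hbound
    _ = (∫ y, moll n φ ε y) * (C1 * C2) := integral_mul_const _ _
    _ = C1 * C2 := by rw [hmoll_one, one_mul]
end
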